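/- Let a ≥ 1 and t < 0 < s be integers. Let M be the matrix with rows (1, 0, j), (x, 1, k), (0, 0, 1), where j ∈ 𝒪/𝒫^{-t}, k ∈ 𝒪/𝒫^{s-t}, and x ∈ 𝒫/𝒫^{s} is nonzero with v(x) ≤ a. Set d = s − v(x). Then there exist M' ∈ I^a and C ∈ GL_3(𝒪) such that M'·diag(π^d, π^{s-d}, π^t) = M·diag(1, π^s, π^t)·C. (That is, the point M·x_{(s,t)} of the affine Grassmannian lies in the I^a-orbit of the vertex (s − 2d, t − d), since diag(π^d, π^{s-d}, π^t) = π^d·x_{(s-2d, t-d)}.) -/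

import Mathlib

noncomputable section

/-- The element π of F = K((π)). -/
def pp (K : Type*) [Field K] : LaurentSeries K := HahnSeries.single (1 : ℤ) (1 : K)

/-- The π-adic valuation on F = K((π)), with v(0) = ⊤. -/
def vv {K : Type*} [Field K] (x : LaurentSeries K) : WithTop ℤ := x.orderTop

/-- x ∈ 𝒫^r, i.e. v(x) ≥ r. -/
def inP {K : Type*} [Field K] (r : ℤ) (x : LaurentSeries K) : Prop := (r : WithTop ℤ) ≤ vv x

/-- x ∈ 𝒫^r/𝒫^{r'} : x is a polynomial x_r π^r + ⋯ + x_{r'-1} π^{r'-1} (possibly 0). -/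
def inPQ {K : Type*} [Field K] (r r' : ℤ) (x : LaurentSeries K) : Prop :=
  inP r x ∧ ∀ i : ℤ, r' ≤ i → x.coeff i = 0

/-- Membership in GL₃(𝒪): entries in 𝒪 and determinant a unit of 𝒪. -/
def inGLO {K : Type*} [Field K] (C : Matrix (Fin 3) (Fin 3) (LaurentSeries K)) : Prop :=
  (∀ i j, inP 0 (C i j)) ∧ vv C.det = 0

/-- The matrix x_{(s,t)} = diag(1, π^s, π^t). -/
def xst (K : Type*) [Field K] (s t : ℤ) : Matrix (Fin 3) (Fin 3) (LaurentSeries K) :=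
  Matrix.diagonal ![1, pp K ^ s, pp K ^ t]

/-- Membership in the subgroup I^a of GL₃(F). -/
def inIa {K : Type*} [Field K] (a : ℤ) (g : Matrix (Fin 3) (Fin 3) (LaurentSeries K)) : Prop :=
  g.det ≠ 0 ∧
  vv (g 0 0) = 0 ∧ vv (g 1 1) = 0 ∧ vv (g 2 2) = 0 ∧
  inP (-a) (g 0 1) ∧ inP (-a) (g 0 2) ∧ inP 0 (g 1 2) ∧
  inP (a + 1) (g 1 0) ∧ inP (a + 1) (g 2 0) ∧ inP 1 (g 2 1)

/-- Membership in x_{(s,t)}·GL₃(𝒪)·x_{(s,t)}⁻¹. -/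
def inConj {K : Type*} [Field K] (s t : ℤ) (g : Matrix (Fin 3) (Fin 3) (LaurentSeries K)) : Prop :=
  ∃ C, inGLO C ∧ g = xst K s t * C * (xst K s t)⁻¹

/-- M represents a γ-fixed point at the vertex (s,t): there is C ∈ GL₃(𝒪) with
γ·M·x_{(s,t)} = M·x_{(s,t)}·C. -/
def reprFixed {K : Type*} [Field K] (γ M : Matrix (Fin 3) (Fin 3) (LaurentSeries K))
    (s t : ℤ) : Prop :=
  ∃ C, inGLO C ∧ γ * (M * xst K s t) = M * xst K s t * C


/-!
Write `x = u π^e` with `u` a unit of `𝒪` and `e = v(x)`, so `e ≤ a` and `e < s`. Then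
`M' = [[1, π^{-e}, j], [0, u, k], [0, 0, 1]]` lies in `I^a` and
`C = [[π^{s-e}, 1, 0], [-u, 0, 0], [0, 0, 1]]` lies in `GL₃(𝒪)` (its determinant is `u`), and
`M'·diag(π^{s-e}, π^e, π^t) = M·x_{(s,t)}·C` is a matrix identity using only
`π^{-e} π^e = 1` and `π^{s-e} π^e = π^s`.
-/

namespace Matrix

theorem upperTriangular_mul_diagonal_eq {R : Type*} [CommRing R] (j k u α β γ σ τ : R)
    (hαγ : α * γ = 1) (hβγ : β * γ = σ) :
    !![1, α, j; 0, u, k; 0, 0, 1] * diagonal ![β, γ, τ] =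
      !![1, 0, j; u * γ, 1, k; 0, 0, 1] * diagonal ![1, σ, τ] *
        !![β, 1, 0; -u, 0, 0; 0, 0, 1] := by
  rw [diagonal_vec3, diagonal_vec3]
  ext i l
  fin_cases i <;> fin_cases l <;> simp [Matrix.mul_apply, Fin.sum_univ_three, hαγ]
  linear_combination -u * hβγ

end Matrix

section LaurentSeries

variable {K : Type*} [Field K]

theorem pp_ne_zero : pp K ≠ 0 := HahnSeries.single_ne_zero one_ne_zero

theorem pp_zpow (n : ℤ) : pp K ^ n = HahnSeries.single n (1 : K) := by
  induction n using Int.induction_on with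
  | zero => rw [zpow_zero, HahnSeries.single_zero_one]
  | succ n ih =>
    rw [zpow_add_one₀ pp_ne_zero, ih, pp, HahnSeries.single_mul_single, mul_one]
  | pred n ih =>
    rw [zpow_sub_one₀ pp_ne_zero, ih, mul_inv_eq_iff_eq_mul₀ pp_ne_zero, pp,
      HahnSeries.single_mul_single, mul_one, sub_add_cancel]

theorem vv_pp_zpow (n : ℤ) : vv (pp K ^ n) = n := by
  rw [pp_zpow]; exact HahnSeries.orderTop_single one_ne_zero

theorem vv_one : vv (1 : LaurentSeries K) = 0 := HahnSeries.orderTop_one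

theorem vv_neg (x : LaurentSeries K) : vv (-x) = vv x := HahnSeries.orderTop_neg

theorem vv_eq_order {x : LaurentSeries K} (hx : x ≠ 0) : vv x = x.order :=
  (HahnSeries.order_eq_orderTop_of_ne_zero hx).symm

theorem ne_zero_of_vv_eq_zero {x : LaurentSeries K} (hx : vv x = 0) : x ≠ 0 := by
  rintro rfl; simp [vv] at hx

theorem inP_zero (r : ℤ) : inP r (0 : LaurentSeries K) := by
  simp [inP, vv]

theorem inP_of_le {r r' : ℤ} (h : r ≤ r') {x : LaurentSeries K} (hx : inP r' x) : inP r x :=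
  le_trans (by exact_mod_cast h) hx

theorem inP_pp_zpow {r n : ℤ} (h : r ≤ n) : inP r (pp K ^ n) := by
  rw [inP, vv_pp_zpow]; exact_mod_cast h

theorem order_lt_of_coeff_eq_zero {x : LaurentSeries K} (hx : x ≠ 0) {r : ℤ}
    (hcoeff : ∀ i, r ≤ i → x.coeff i = 0) : x.order < r := by
  by_contra! h
  exact hx (HahnSeries.coeff_order_eq_zero.mp (hcoeff _ h))

theorem exists_vv_eq_zero_mul_pp_zpow {x : LaurentSeries K} (hx : x ≠ 0) :
    ∃ u, vv u = 0 ∧ x = u * pp K ^ x.order := by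
  have hpp : ∀ n : ℤ, pp K ^ n ≠ 0 := fun n => zpow_ne_zero n pp_ne_zero
  refine ⟨x * pp K ^ (-x.order), ?_, ?_⟩
  · rw [vv_eq_order (mul_ne_zero hx (hpp _)), HahnSeries.order_mul hx (hpp _), pp_zpow,
      HahnSeries.order_single one_ne_zero, add_neg_cancel]
    rfl
  · rw [mul_assoc, ← zpow_add₀ pp_ne_zero, neg_add_cancel, zpow_zero, mul_one]

theorem inIa_upperTriangular {a : ℤ} {α j k u : LaurentSeries K} (hu : vv u = 0)
    (hα : inP (-a) α) (hj : inP (-a) j) (hk : inP 0 k) :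
    inIa a !![1, α, j; 0, u, k; 0, 0, 1] := by
  refine ⟨?_, vv_one, hu, vv_one, hα, hj, hk, inP_zero _, inP_zero _, inP_zero _⟩
  simpa [Matrix.det_fin_three] using ne_zero_of_vv_eq_zero hu

theorem inGLO_of_vv_eq_zero {β u : LaurentSeries K} (hβ : inP 0 β) (hu : vv u = 0) :
    inGLO !![β, 1, 0; -u, 0, 0; 0, 0, 1] := by
  refine ⟨?_, by simpa [Matrix.det_fin_three] using hu⟩
  have hu' : inP 0 (-u) := by rw [inP, vv_neg, hu]; rfl
  have hone : inP 0 (1 : LaurentSeries K) := by rw [inP, vv_one]; rfl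
  intro i l
  fin_cases i <;> fin_cases l <;> simp [hβ, hu', hone, inP_zero]

end LaurentSeries

theorem stmt6_general (K : Type*) [Field K] (a s t : ℤ) (ha : 1 ≤ a)
    (j k x : LaurentSeries K) (hj : inPQ 0 (-t) j) (hk : inPQ 0 (s - t) k)
    (hx : inPQ 1 s x) (hx0 : x ≠ 0) (hxa : vv x ≤ (a : WithTop ℤ))
    (d : ℤ) (hd : d = s - x.order) :
    ∃ M' C : Matrix (Fin 3) (Fin 3) (LaurentSeries K), inIa a M' ∧ inGLO C ∧
      M' * Matrix.diagonal ![pp K ^ d, pp K ^ (s - d), pp K ^ t] =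
        !![1, 0, j; x, 1, k; 0, 0, 1] * xst K s t * C := by
  obtain ⟨u, hu, hxu⟩ := exists_vv_eq_zero_mul_pp_zpow hx0
  set e := x.order
  have hes : e < s := order_lt_of_coeff_eq_zero hx0 hx.2
  have hea : e ≤ a := by rw [vv_eq_order hx0] at hxa; exact_mod_cast hxa
  subst hd
  refine ⟨!![1, pp K ^ (-e), j; 0, u, k; 0, 0, 1],
    !![pp K ^ (s - e), 1, 0; -u, 0, 0; 0, 0, 1],
    inIa_upperTriangular hu (inP_pp_zpow (by omega)) (inP_of_le (by omega) hj.1) hk.1,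
    inGLO_of_vv_eq_zero (inP_pp_zpow (by omega)) hu, ?_⟩
  rw [sub_sub_cancel, xst, hxu]
  apply Matrix.upperTriangular_mul_diagonal_eq
  · rw [← zpow_add₀ pp_ne_zero, neg_add_cancel, zpow_zero]
  · rw [← zpow_add₀ pp_ne_zero, sub_add_cancel]

theorem stmt6 (K : Type*) [Field K] (a s t : ℤ) (ha : 1 ≤ a) (ht : t < 0) (hs : 0 < s)
    (j k x : LaurentSeries K) (hj : inPQ 0 (-t) j) (hk : inPQ 0 (s - t) k)
    (hx : inPQ 1 s x) (hx0 : x ≠ 0) (hxa : vv x ≤ (a : WithTop ℤ))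
    (d : ℤ) (hd : d = s - x.order) :
    ∃ M' C : Matrix (Fin 3) (Fin 3) (LaurentSeries K), inIa a M' ∧ inGLO C ∧
      M' * Matrix.diagonal ![pp K ^ d, pp K ^ (s - d), pp K ^ t] =
        !![1, 0, j; x, 1, k; 0, 0, 1] * xst K s t * C :=
  stmt6_general K a s t ha j k x hj hk hx hx0 hxa d hd
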